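/- For the symmetric two-component Gaussian mixture P_θ = (1/2)N(−θ, I_d) + (1/2)N(θ, I_d) on ℝ^d, the chi-squared divergence satisfies χ²(P_θ ‖ N(0, I_d)) = cosh(‖θ‖²) − 1, and consequently KL(P_θ ‖ N(0, I_d)) ≤ log cosh(‖θ‖²). -/

import Mathlib

open MeasureTheory ProbabilityTheory
open scoped ENNReal

/-- The standard Gaussian measure `N(0, I_d)` on `ℝ^d`. -/
noncomputable def stdGaussianPi (d : ℕ) : Measure (Fin d → ℝ) :=
  Measure.pi fun _ => gaussianReal 0 1

/-- The symmetric mixture `(1/2)N(−θ, I_d) + (1/2)N(θ, I_d)` on `ℝ^d`. -/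
noncomputable def mixGPi (d : ℕ) (θ : Fin d → ℝ) : Measure (Fin d → ℝ) :=
  (1 / 2 : ℝ≥0∞) • (stdGaussianPi d).map (fun z => z - θ) +
    (1 / 2 : ℝ≥0∞) • (stdGaussianPi d).map (fun z => z + θ)

/-- Chi-squared divergence `χ²(P‖Q) = ∫ (dP/dQ)² dQ − 1`. -/
noncomputable def chiSqDiv {d : ℕ} (P Q : Measure (Fin d → ℝ)) : ℝ :=
  (∫ x, (P.rnDeriv Q x).toReal ^ 2 ∂Q) - 1

/-- KL divergence `KL(P‖Q) = ∫ log(dP/dQ) dP`. -/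
noncomputable def klDivR {d : ℕ} (P Q : Measure (Fin d → ℝ)) : ℝ :=
  ∫ x, Real.log (P.rnDeriv Q x).toReal ∂P

/-! A shifted standard Gaussian `N(c, I_d)` has density `exp(⟨c, x⟩ - ‖c‖²/2)` against
`N(0, I_d)`, so the likelihood ratio of `P_θ` is `r(x) = exp(-‖θ‖²/2) cosh ⟨θ, x⟩`. Then
`r² = exp(-‖θ‖²) (1 + cosh ⟨2θ, x⟩) / 2`, and the Gaussian moment generating function
`E exp ⟨c, x⟩ = exp(‖c‖²/2)` gives `E r² = cosh ‖θ‖²`. The KL bound is Jensen's inequality for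
the concave `log` under `P_θ`: `KL = E_P log r ≤ log E_P r = log E r² = log (1 + χ²)`. -/

open Real
open scoped NNReal

namespace MeasureTheory

theorem lintegral_fin_nat_prod_eq_prod {n : ℕ} {E : Type*} [MeasurableSpace E]
    (μ : Fin n → Measure E) [∀ i, SigmaFinite (μ i)] {f : Fin n → E → ℝ≥0∞}
    (hf : ∀ i, Measurable (f i)) :
    ∫⁻ x, ∏ i, f i (x i) ∂Measure.pi μ = ∏ i, ∫⁻ t, f i t ∂μ i := by
  induction n with
  | zero => simp
  | succ n ih =>
    calc
      _ = ∫⁻ y : E × (Fin n → E), f 0 y.1 * ∏ i : Fin n, f i.succ (y.2 i)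
          ∂(μ 0).prod (Measure.pi fun i => μ i.succ) := by
        rw [← ((measurePreserving_piFinSuccAbove μ 0).symm).lintegral_comp_emb
          (MeasurableEquiv.measurableEmbedding _)]
        simp [MeasurableEquiv.piFinSuccAbove_symm_apply, Fin.insertNthEquiv, Fin.prod_univ_succ]
      _ = (∫⁻ t, f 0 t ∂μ 0) * ∏ i : Fin n, ∫⁻ t, f i.succ t ∂μ i.succ := by
        rw [lintegral_prod_mul (g := fun y : Fin n → E => ∏ i : Fin n, f i.succ (y i))
          (hf 0).aemeasurable
          (Finset.measurable_prod _ fun i _ => (hf i.succ).comp (measurable_pi_apply i)).aemeasurable,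
          ih _ fun i => hf i.succ]
      _ = _ := (Fin.prod_univ_succ fun i => ∫⁻ t, f i t ∂μ i).symm

theorem Measure.pi_withDensity {n : ℕ} {E : Type*} [MeasurableSpace E]
    (μ : Fin n → Measure E) [∀ i, SigmaFinite (μ i)] {f : Fin n → E → ℝ≥0∞}
    (hf : ∀ i, Measurable (f i)) [∀ i, SigmaFinite ((μ i).withDensity (f i))] :
    Measure.pi (fun i => (μ i).withDensity (f i))
      = (Measure.pi μ).withDensity fun x => ∏ i, f i (x i) := by
  refine Measure.pi_eq fun s hs => ?_
  rw [withDensity_apply _ (.univ_pi hs), Measure.restrict_pi_pi,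
    lintegral_fin_nat_prod_eq_prod _ hf]
  exact Finset.prod_congr rfl fun i _ => (withDensity_apply _ (hs i)).symm

end MeasureTheory

namespace ProbabilityTheory

lemma gaussianPDFReal_zero_mul_exp (m : ℝ) {v : ℝ≥0} (hv : v ≠ 0) (x : ℝ) :
    gaussianPDFReal 0 v x * exp ((m * x - m ^ 2 / 2) / v) = gaussianPDFReal m v x := by
  rw [gaussianPDFReal, gaussianPDFReal, mul_assoc _ (rexp _), ← exp_add]
  congr 2
  field_simp
  ring

lemma gaussianReal_eq_withDensity (m : ℝ) {v : ℝ≥0} (hv : v ≠ 0) :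
    gaussianReal m v = (gaussianReal 0 v).withDensity
      fun x => ENNReal.ofReal (exp ((m * x - m ^ 2 / 2) / v)) := by
  rw [gaussianReal_of_var_ne_zero _ hv, gaussianReal_of_var_ne_zero _ hv,
    ← withDensity_mul _ (measurable_gaussianPDF 0 v) (by fun_prop)]
  congr 1
  funext x
  simp only [Pi.mul_apply, gaussianPDF_def]
  rw [← ENNReal.ofReal_mul (gaussianPDFReal_nonneg 0 v x), gaussianPDFReal_zero_mul_exp m hv]

end ProbabilityTheory

instance (d : ℕ) : IsProbabilityMeasure (stdGaussianPi d) :=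
  inferInstanceAs (IsProbabilityMeasure (Measure.pi _))

lemma stdGaussianPi_map_add (d : ℕ) (c : Fin d → ℝ) :
    (stdGaussianPi d).map (· + c) = (stdGaussianPi d).withDensity
      fun x => ENNReal.ofReal (exp (∑ i, c i * x i - (∑ i, c i ^ 2) / 2)) := by
  have hshift : (stdGaussianPi d).map (· + c) = Measure.pi fun i => gaussianReal (c i) 1 := by
    rw [stdGaussianPi, show (· + c) = fun (x : Fin d → ℝ) i => x i + c i from rfl,
      Measure.pi_map_pi fun i => (measurable_add_const (c i)).aemeasurable]
    simp_rw [gaussianReal_map_add_const, zero_add]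
  have hdens : (fun i => gaussianReal (c i) 1) = fun i => (gaussianReal 0 1).withDensity
      fun t => ENNReal.ofReal (exp (c i * t - c i ^ 2 / 2)) := by
    simp_rw [gaussianReal_eq_withDensity (c _) one_ne_zero, NNReal.coe_one, div_one]
  rw [hshift, hdens, Measure.pi_withDensity _ fun i => by fun_prop]
  congr 1
  funext x
  rw [← ENNReal.ofReal_prod_of_nonneg fun i _ => (exp_pos _).le, ← exp_sum,
    Finset.sum_sub_distrib, Finset.sum_div]

noncomputable def mixGPiDensity {d : ℕ} (θ x : Fin d → ℝ) : ℝ :=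
  exp (-(∑ i, θ i ^ 2) / 2) * cosh (∑ i, θ i * x i)

lemma mixGPiDensity_pos {d : ℕ} (θ x : Fin d → ℝ) : 0 < mixGPiDensity θ x :=
  mul_pos (exp_pos _) (cosh_pos _)

@[fun_prop]
lemma measurable_mixGPiDensity {d : ℕ} (θ : Fin d → ℝ) : Measurable (mixGPiDensity θ) := by
  unfold mixGPiDensity
  fun_prop

lemma mixGPi_eq_withDensity (d : ℕ) (θ : Fin d → ℝ) :
    mixGPi d θ = (stdGaussianPi d).withDensity fun x => ENNReal.ofReal (mixGPiDensity θ x) := by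
  simp_rw [mixGPi, sub_eq_add_neg]
  rw [stdGaussianPi_map_add, stdGaussianPi_map_add,
    ← withDensity_smul _ (by fun_prop), ← withDensity_smul _ (by fun_prop),
    ← withDensity_add_right _ (by fun_prop)]
  congr 1
  funext x
  simp only [Pi.add_apply, Pi.smul_apply, smul_eq_mul, Pi.neg_apply, neg_sq, neg_mul,
    Finset.sum_neg_distrib]
  rw [← ENNReal.ofReal_ofNat 2, ← ENNReal.ofReal_one, ← ENNReal.ofReal_div_of_pos two_pos,
    ← ENNReal.ofReal_mul (by norm_num), ← ENNReal.ofReal_mul (by norm_num),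
    ← ENNReal.ofReal_add (by positivity) (by positivity), mixGPiDensity, cosh_eq]
  congr 1
  rw [sub_eq_add_neg, sub_eq_add_neg, exp_add, exp_add, neg_div]
  ring

lemma integrable_exp_sum_mul_stdGaussianPi (d : ℕ) (c : Fin d → ℝ) :
    Integrable (fun x => exp (∑ i, c i * x i)) (stdGaussianPi d) := by
  simp_rw [exp_sum]
  exact .fintype_prod (f := fun i t => exp (c i * t)) fun i => integrable_exp_mul_gaussianReal _

lemma integral_exp_sum_mul_stdGaussianPi (d : ℕ) (c : Fin d → ℝ) :
    ∫ x, exp (∑ i, c i * x i) ∂stdGaussianPi d = exp ((∑ i, c i ^ 2) / 2) := by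
  have h1 (a : ℝ) : ∫ t, exp (a * t) ∂gaussianReal 0 1 = exp (a ^ 2 / 2) := by
    simpa [mgf] using congrFun (mgf_id_gaussianReal (μ := 0) (v := 1)) a
  simp_rw [exp_sum]
  rw [stdGaussianPi, integral_fintype_prod_eq_prod (fun i t => exp (c i * t))]
  simp_rw [h1, ← exp_sum, Finset.sum_div]

lemma cosh_sum_mul_eq (d : ℕ) (c x : Fin d → ℝ) :
    cosh (∑ i, c i * x i) = (exp (∑ i, c i * x i) + exp (∑ i, -c i * x i)) / 2 := by
  simp_rw [cosh_eq, neg_mul, Finset.sum_neg_distrib]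

lemma integrable_cosh_sum_mul_stdGaussianPi (d : ℕ) (c : Fin d → ℝ) :
    Integrable (fun x => cosh (∑ i, c i * x i)) (stdGaussianPi d) := by
  simp_rw [cosh_sum_mul_eq]
  exact ((integrable_exp_sum_mul_stdGaussianPi d c).add
    (integrable_exp_sum_mul_stdGaussianPi d fun i => -c i)).div_const 2

lemma integral_cosh_sum_mul_stdGaussianPi (d : ℕ) (c : Fin d → ℝ) :
    ∫ x, cosh (∑ i, c i * x i) ∂stdGaussianPi d = exp ((∑ i, c i ^ 2) / 2) := by
  simp_rw [cosh_sum_mul_eq]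
  rw [integral_div, integral_add (integrable_exp_sum_mul_stdGaussianPi d c)
    (integrable_exp_sum_mul_stdGaussianPi d fun i => -c i), integral_exp_sum_mul_stdGaussianPi,
    integral_exp_sum_mul_stdGaussianPi]
  simp_rw [neg_sq]
  ring

lemma mixGPiDensity_sq {d : ℕ} (θ x : Fin d → ℝ) :
    mixGPiDensity θ x ^ 2
      = exp (-∑ i, θ i ^ 2) / 2 * (1 + cosh (∑ i, 2 * θ i * x i)) := by
  have hcosh : cosh (∑ i, 2 * θ i * x i) = 2 * cosh (∑ i, θ i * x i) ^ 2 - 1 := by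
    simp_rw [mul_assoc, ← Finset.mul_sum, cosh_two_mul, sinh_sq]
    ring
  rw [mixGPiDensity, hcosh, mul_pow, ← exp_nat_mul]
  ring_nf

lemma integrable_mixGPiDensity_sq (d : ℕ) (θ : Fin d → ℝ) :
    Integrable (fun x => mixGPiDensity θ x ^ 2) (stdGaussianPi d) := by
  simp_rw [mixGPiDensity_sq]
  exact ((integrable_const 1).add (integrable_cosh_sum_mul_stdGaussianPi d _)).const_mul _

lemma integral_mixGPiDensity_sq (d : ℕ) (θ : Fin d → ℝ) :
    ∫ x, mixGPiDensity θ x ^ 2 ∂stdGaussianPi d = cosh (∑ i, θ i ^ 2) := by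
  simp_rw [mixGPiDensity_sq]
  rw [integral_const_mul, integral_add (integrable_const 1)
    (integrable_cosh_sum_mul_stdGaussianPi d _), integral_cosh_sum_mul_stdGaussianPi]
  simp_rw [mul_pow, ← Finset.mul_sum, cosh_eq]
  set t := ∑ i, θ i ^ 2
  have hexp : exp (-t) * exp ((2 ^ 2 * t) / 2) = exp t := by rw [← exp_add]; ring_nf
  rw [integral_const, probReal_univ, one_smul]
  linear_combination hexp / 2

lemma integral_log_le_log_integral {α : Type*} [MeasurableSpace α] {μ : Measure α}
    [IsProbabilityMeasure μ] {g : α → ℝ} (hg : ∀ᵐ x ∂μ, 0 < g x) (hgi : Integrable g μ)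
    (hlog : Integrable (fun x => log (g x)) μ) :
    ∫ x, log (g x) ∂μ ≤ log (∫ x, g x ∂μ) := by
  set c := ∫ x, g x ∂μ
  have hc : 0 < c := by
    refine (integral_pos_iff_support_of_nonneg_ae (hg.mono fun x hx => hx.le) hgi).2 ?_
    refine pos_iff_ne_zero.2 fun h0 => ?_
    have hfalse : ∀ᵐ x ∂μ, False :=
      (hg.and (measure_eq_zero_iff_ae_notMem.1 h0)).mono fun x hx => hx.2 hx.1.ne'
    exact NeZero.ne μ (by simpa using hfalse)
  -- the tangent line of the concave `log` at `c`
  have htangent : ∀ᵐ x ∂μ, log (g x) ≤ log c + g x / c - 1 := hg.mono fun x hx => by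
    have := log_le_sub_one_of_pos (div_pos hx hc)
    rw [log_div hx.ne' hc.ne'] at this
    linarith
  calc ∫ x, log (g x) ∂μ ≤ ∫ x, (log c + g x / c - 1) ∂μ :=
        integral_mono_ae hlog (((integrable_const _).add (hgi.div_const c)).sub
          (integrable_const _)) htangent
    _ = log c := by
        rw [integral_sub _ (integrable_const _), integral_add (integrable_const _)
          (hgi.div_const c), integral_div]
        · rw [div_self hc.ne']
          simp
        · exact (integrable_const _).add (hgi.div_const c)

lemma klDivR_le_log_one_add_chiSqDiv {d : ℕ} {P Q : Measure (Fin d → ℝ)}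
    [IsProbabilityMeasure P] [SigmaFinite Q] (hPQ : P ≪ Q)
    (hsq : Integrable (fun x => (P.rnDeriv Q x).toReal ^ 2) Q)
    (hlog : Integrable (fun x => log (P.rnDeriv Q x).toReal) P) :
    klDivR P Q ≤ log (1 + chiSqDiv P Q) := by
  have hpos : ∀ᵐ x ∂P, 0 < (P.rnDeriv Q x).toReal := by
    filter_upwards [Measure.rnDeriv_pos hPQ, hPQ.ae_le (P.rnDeriv_lt_top Q)] with x h0 htop
    exact ENNReal.toReal_pos h0.ne' htop.ne
  have hint : Integrable (fun x => (P.rnDeriv Q x).toReal) P :=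
    (integrable_toReal_rnDeriv_mul_iff hPQ).1 (by simpa only [sq] using hsq)
  have hmean : ∫ x, (P.rnDeriv Q x).toReal ∂P = 1 + chiSqDiv P Q := by
    rw [chiSqDiv, ← integral_toReal_rnDeriv_mul hPQ]
    simp only [sq, add_sub_cancel]
  rw [← hmean]
  exact integral_log_le_log_integral hpos hint hlog

instance (d : ℕ) (θ : Fin d → ℝ) : IsProbabilityMeasure (mixGPi d θ) := by
  have hsub : Measurable fun z : Fin d → ℝ => z - θ := by fun_prop
  have hadd : Measurable fun z : Fin d → ℝ => z + θ := by fun_prop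
  constructor
  simp [mixGPi, Measure.map_apply hsub .univ, Measure.map_apply hadd .univ,
    ENNReal.inv_two_add_inv_two]

lemma toReal_rnDeriv_mixGPi (d : ℕ) (θ : Fin d → ℝ) :
    (fun x => ((mixGPi d θ).rnDeriv (stdGaussianPi d) x).toReal) =ᵐ[stdGaussianPi d]
      mixGPiDensity θ := by
  rw [mixGPi_eq_withDensity]
  filter_upwards [Measure.rnDeriv_withDensity _ (by fun_prop :
    Measurable fun x => ENNReal.ofReal (mixGPiDensity θ x))] with x hx
  rw [hx, ENNReal.toReal_ofReal (mixGPiDensity_pos θ x).le]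

/-- `χ²(P_θ ‖ N(0, I_d)) = cosh(‖θ‖²) − 1` and, consequently,
`KL(P_θ ‖ N(0, I_d)) ≤ log cosh(‖θ‖²)`. -/
theorem stmt_16 (d : ℕ) (θ : Fin d → ℝ) :
    chiSqDiv (mixGPi d θ) (stdGaussianPi d) = Real.cosh (∑ i, θ i ^ 2) - 1 ∧
    klDivR (mixGPi d θ) (stdGaussianPi d) ≤ Real.log (Real.cosh (∑ i, θ i ^ 2)) := by
  have hsq_ae : (fun x => ((mixGPi d θ).rnDeriv (stdGaussianPi d) x).toReal ^ 2)
      =ᵐ[stdGaussianPi d] fun x => mixGPiDensity θ x ^ 2 := by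
    filter_upwards [toReal_rnDeriv_mixGPi d θ] with x hx
    rw [hx]
  have hχ : chiSqDiv (mixGPi d θ) (stdGaussianPi d) = cosh (∑ i, θ i ^ 2) - 1 := by
    rw [chiSqDiv, integral_congr_ae hsq_ae, integral_mixGPiDensity_sq]
  refine ⟨hχ, ?_⟩
  by_cases hlog : Integrable (fun x => log ((mixGPi d θ).rnDeriv (stdGaussianPi d) x).toReal)
      (mixGPi d θ)
  · have hac : mixGPi d θ ≪ stdGaussianPi d := by
      rw [mixGPi_eq_withDensity]
      exact withDensity_absolutelyContinuous _ _
    have hsq := (integrable_mixGPiDensity_sq d θ).congr hsq_ae.symm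
    calc klDivR (mixGPi d θ) (stdGaussianPi d)
        ≤ log (1 + chiSqDiv (mixGPi d θ) (stdGaussianPi d)) :=
          klDivR_le_log_one_add_chiSqDiv hac hsq hlog
      _ = log (cosh (∑ i, θ i ^ 2)) := by rw [hχ, add_sub_cancel]
  · -- a non-integrable `log r` makes `klDivR` the junk value `0`
    rw [klDivR, integral_undef hlog]
    exact log_nonneg (one_le_cosh _)
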